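/- arXiv:2409.09720 — 6 statements merged into one kernel-verified Lean document; each statement's English description precedes it below -/
import Mathlib

section
/- Let $d, w_0, w_1, w_2, w_3, w_4$ be positive integers satisfying $a_0 w_0 = d$, $w_0 + 2w_1 = d$, $a_2 w_2 = d$, $w_2 + a_3 w_3 = d$, and $w_3 + 2w_4 = d$ for positive integers $a_0, a_2, a_3$ (the weight equations for the chain-chain polynomial $f = z_0^{a_0} + z_0 z_1^2 + z_2^{a_2} + z_2 z_3^{a_3} + z_3 z_4^2$). Then the tuple $\tilde{w}_0 = w_0(d - w_2)$, $\tilde{w}_1 = d(d - w_2)$, $\tilde{w}_2 = w_2(2d - 2w_2 - w_3)$, $\tilde{w}_3 = d w_3$, $\tilde{w}_4 = d(d - w_2)$, $\tilde{d} = 2d(d - w_2)$ satisfies the transposed weight equations: $a_0 \tilde{w}_0 + \tilde{w}_1 = \tilde{d}$, $2\tilde{w}_1 = \tilde{d}$, $a_2 \tilde{w}_2 + \tilde{w}_3 = \tilde{d}$, $a_3 \tilde{w}_3 + \tilde{w}_4 = \tilde{d}$, and $2\tilde{w}_4 = \tilde{d}$. -/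
/-- Berglund–Hübsch transpose weight solution for the chain-chain polynomial
`f = z₀^{a₀} + z₀ z₁² + z₂^{a₂} + z₂ z₃^{a₃} + z₃ z₄²`. -/
theorem bh_transpose_weights_chain_chain
    (d w0 w1 w2 w3 w4 a0 a2 a3 : ℤ)
    (hd : 0 < d) (hw0 : 0 < w0) (hw1 : 0 < w1) (hw2 : 0 < w2)
    (hw3 : 0 < w3) (hw4 : 0 < w4)
    (ha0 : 0 < a0) (ha2 : 0 < a2) (ha3 : 0 < a3)
    (h1 : a0 * w0 = d) (h2 : w0 + 2 * w1 = d) (h3 : a2 * w2 = d)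
    (h4 : w2 + a3 * w3 = d) (h5 : w3 + 2 * w4 = d) :
    a0 * (w0 * (d - w2)) + d * (d - w2) = 2 * d * (d - w2) ∧
    2 * (d * (d - w2)) = 2 * d * (d - w2) ∧
    a2 * (w2 * (2 * d - 2 * w2 - w3)) + d * w3 = 2 * d * (d - w2) ∧
    a3 * (d * w3) + d * (d - w2) = 2 * d * (d - w2) ∧
    2 * (d * (d - w2)) = 2 * d * (d - w2) := by
  refine ⟨by linear_combination (d - w2) * h1, by ring,
    by linear_combination (2 * d - 2 * w2 - w3) * h3, by linear_combination d * h4, by ring⟩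
end

section
/- Let $d, w_0, w_2, w_3$ be positive integers with $w_2 < d$, $w_3 < d$, $2w_2 + w_3 < 2d$, and $w_0 + w_3 \geq 6 w_2$. Define $\tilde{w}_0 = w_0(d - w_2)$, $\tilde{w}_2 = w_2(2d - 2w_2 - w_3)$, $\tilde{w}_3 = d w_3$. Then $\tilde{w}_0 + \tilde{w}_2 + \tilde{w}_3 \geq 4 \tilde{w}_2$, and moreover $\tilde{w}_0 + \tilde{w}_2 + \tilde{w}_3 \geq 4 \min\{\tilde{w}_0, \tilde{w}_2, \tilde{w}_3\}$. -/
/-- Key inequality of Lemma 4.2: the Boyer–van Coevering obstruction for the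
perturbed Berglund–Hübsch dual of a chain-chain polynomial. -/
theorem bvc_obstruction_chain_chain
    (d w0 w2 w3 : ℤ)
    (hd : 0 < d) (hw0 : 0 < w0) (hw2 : 0 < w2) (hw3 : 0 < w3)
    (h2 : w2 < d) (h3 : w3 < d) (h23 : 2 * w2 + w3 < 2 * d)
    (hyp : w0 + w3 ≥ 6 * w2) :
    w0 * (d - w2) + w2 * (2 * d - 2 * w2 - w3) + d * w3 ≥
      4 * (w2 * (2 * d - 2 * w2 - w3)) ∧
    w0 * (d - w2) + w2 * (2 * d - 2 * w2 - w3) + d * w3 ≥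
      4 * min (w0 * (d - w2)) (min (w2 * (2 * d - 2 * w2 - w3)) (d * w3)) := by
  have key : (w0 + w3 - 6 * w2) * (d - w2) ≥ 0 :=
    mul_nonneg (by linarith) (by linarith)
  have h1 : w0 * (d - w2) + w2 * (2 * d - 2 * w2 - w3) + d * w3 ≥
      4 * (w2 * (2 * d - 2 * w2 - w3)) := by nlinarith [mul_pos hw2 hw3]
  refine ⟨h1, ?_⟩
  have hmin : min (w0 * (d - w2)) (min (w2 * (2 * d - 2 * w2 - w3)) (d * w3)) ≤
      w2 * (2 * d - 2 * w2 - w3) := (min_le_right _ _).trans (min_le_left _ _)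
  linarith
end

section
/- Let $m_2, m_3$ be coprime positive integers with $m_3$ odd, $d = m_2 m_3$. The polynomial $\Delta(t) = \frac{(t^{2d} - 1)(t - 1)}{(t^{m_3} - 1)(t^{2m_2} - 1)}$ is a polynomial with integer coefficients satisfying $\Delta(1) = 1$ and $\Delta(-1) = m_3$. -/
open Polynomial Finset

lemma sum_pow_mod_perm (a b : ℕ) (ha : 0 < a) (hb : Nat.Coprime b a) :
    ∑ i ∈ range a, (X : ℤ[X]) ^ ((b * i) % a) = ∑ i ∈ range a, (X : ℤ[X]) ^ i := by
  haveI : NeZero a := ⟨ha.ne'⟩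
  have h1 : ∀ i : ℕ, (b * i) % a = ((b : ZMod a) * (i : ZMod a)).val := by
    intro i
    rw [← Nat.cast_mul, ZMod.val_natCast]
  calc ∑ i ∈ range a, (X : ℤ[X]) ^ ((b * i) % a)
      = ∑ x : ZMod a, (X : ℤ[X]) ^ ((b : ZMod a) * x).val := by
        refine Finset.sum_nbij' (fun i => (i : ZMod a)) (fun x => x.val) ?_ ?_ ?_ ?_ ?_
        · intro i _; exact Finset.mem_univ _
        · intro x _; exact Finset.mem_range.2 (ZMod.val_lt x)
        · intro i hi; exact ZMod.val_cast_of_lt (Finset.mem_range.1 hi)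
        · intro x _; simp [ZMod.natCast_val, ZMod.cast_id]
        · intro i _; rw [h1]
    _ = ∑ x : ZMod a, (X : ℤ[X]) ^ x.val := by
        have := Equiv.sum_comp (Units.mulLeft (ZMod.unitOfCoprime b hb))
          (fun x : ZMod a => (X : ℤ[X]) ^ x.val)
        simpa [Units.mulLeft, ZMod.coe_unitOfCoprime] using this
    _ = ∑ i ∈ range a, (X : ℤ[X]) ^ i := by
        refine Finset.sum_nbij' (fun x => x.val) (fun i => (i : ZMod a)) ?_ ?_ ?_ ?_ ?_
        · intro x _; exact Finset.mem_range.2 (ZMod.val_lt x)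
        · intro i _; exact Finset.mem_univ _
        · intro x _; simp [ZMod.natCast_val, ZMod.cast_id]
        · intro i hi; exact ZMod.val_cast_of_lt (Finset.mem_range.1 hi)
        · intro x _; rfl

/-- Alexander polynomial computation of Theorem 4.3(3):
`Δ(t) = (t^{2d}-1)(t-1)/((t^{m₃}-1)(t^{2m₂}-1))` is an integer polynomial
with `Δ(1) = 1` and `Δ(-1) = m₃`. -/
theorem alexander_poly_m3_odd
    (m2 m3 : ℕ) (hm2 : 0 < m2) (hm3 : 0 < m3)
    (hcop : Nat.Coprime m2 m3) (hodd : Odd m3) :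
    ∃ P : Polynomial ℤ,
      (X ^ (2 * (m2 * m3)) - 1) * (X - 1) =
        P * ((X ^ m3 - 1) * (X ^ (2 * m2) - 1)) ∧
      P.eval 1 = 1 ∧ P.eval (-1) = (m3 : ℤ) := by
  set a := m3
  set b := 2 * m2 with hb_def
  have hba : Nat.Coprime b a := by
    refine Nat.Coprime.mul ?_ hcop
    rwa [Nat.coprime_two_left]
  -- G and S
  set G : ℤ[X] := ∑ i ∈ range a, X ^ i with hG
  set S : ℤ[X] := ∑ i ∈ range a, X ^ (b * i) with hS
  -- X^a - 1 divides S - G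
  have hdvd : (X ^ a - 1 : ℤ[X]) ∣ S - G := by
    have : S - G = ∑ i ∈ range a, ((X : ℤ[X]) ^ (b * i) - X ^ ((b * i) % a)) := by
      rw [Finset.sum_sub_distrib, ← hS, sum_pow_mod_perm a b hm3 hba, ← hG]
    rw [this]
    refine Finset.dvd_sum fun i _ => ?_
    have : (X : ℤ[X]) ^ (b * i) - X ^ ((b * i) % a) =
        X ^ ((b * i) % a) * ((X ^ a) ^ (b * i / a) - 1 ^ (b * i / a)) := by
      rw [one_pow, mul_sub, mul_one, ← pow_mul, ← pow_add, Nat.mod_add_div (b*i) a]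
    rw [this]
    exact Dvd.dvd.mul_left (sub_dvd_pow_sub_pow _ 1 _) _
  have hGX : G * (X - 1) = (X ^ a - 1 : ℤ[X]) := geom_sum_mul X a
  have hGdvd : G ∣ S := by
    have h1 : G ∣ S - G := dvd_trans ⟨X - 1, hGX.symm⟩ hdvd
    have h2 := dvd_add h1 (dvd_refl G)
    rwa [sub_add_cancel] at h2
  obtain ⟨P, hP⟩ := hGdvd
  refine ⟨P, ?_, ?_, ?_⟩
  · have hgeo : S * (X ^ b - 1) = (X ^ (b * a) - 1 : ℤ[X]) := by
      have h := geom_sum_mul ((X : ℤ[X]) ^ b) a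
      rw [← pow_mul] at h
      rw [hS]
      rw [show (∑ i ∈ range a, (X:ℤ[X]) ^ (b * i)) = ∑ i ∈ range a, ((X:ℤ[X]) ^ b) ^ i from
        Finset.sum_congr rfl fun i _ => by rw [pow_mul]]
      exact h
    have hexp : 2 * (m2 * m3) = b * a := by rw [hb_def]; ring
    calc (X ^ (2 * (m2 * m3)) - 1 : ℤ[X]) * (X - 1)
        = (X ^ (b * a) - 1) * (X - 1) := by rw [hexp]
      _ = (S * (X ^ b - 1)) * (X - 1) := by rw [hgeo]
      _ = ((G * P) * (X ^ b - 1)) * (X - 1) := by rw [← hP]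
      _ = P * ((G * (X - 1)) * (X ^ b - 1)) := by ring
      _ = P * ((X ^ a - 1) * (X ^ b - 1)) := by rw [hGX]
  · have hSe : S.eval 1 = (a : ℤ) := by simp [hS, eval_finset_sum]
    have hGe : G.eval 1 = (a : ℤ) := by simp [hG, eval_finset_sum]
    have h := congrArg (Polynomial.eval (1 : ℤ)) hP
    rw [eval_mul, hSe, hGe] at h
    have ha : (a : ℤ) ≠ 0 := Int.natCast_ne_zero.2 hm3.ne'
    have h2 : (a : ℤ) * P.eval 1 = (a : ℤ) * 1 := by linarith
    exact mul_left_cancel₀ ha h2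
  · have hSe : S.eval (-1) = (a : ℤ) := by
      simp only [hS, eval_finset_sum, eval_pow, eval_X]
      rw [Finset.sum_congr rfl (fun i _ => by
        rw [hb_def, mul_assoc, pow_mul]; norm_num :
        ∀ i ∈ range a, ((-1 : ℤ)) ^ (b * i) = 1)]
      simp
    have hGe : G.eval (-1) = 1 := by
      simp only [hG, eval_finset_sum, eval_pow, eval_X]
      rw [neg_one_geom_sum, if_neg (Nat.not_even_iff_odd.2 hodd)]
    have h := congrArg (Polynomial.eval (-1 : ℤ)) hP
    rw [eval_mul, hSe, hGe, one_mul] at h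
    exact h.symm
end

section
/- Let $m_2, m_3$ be coprime positive integers with $m_3$ even, $d = m_2 m_3$. Then the rational function $\Delta(t) = \frac{(t^{d} - 1)^2 (t-1)}{(t^{m_3} - 1)(t^{2m_2} - 1)}$ is a polynomial with exactly one factor of $(t-1)$, i.e., $\Delta(1) = 0$ and $\lim_{t \to 1} \frac{\Delta(t)}{t - 1} \neq 0$. -/
open Polynomial

/-- Alexander polynomial computation of Theorem 4.6 (`m₃` even):
`Δ(t) = (t^d-1)²(t-1)/((t^{m₃}-1)(t^{2m₂}-1))` is a polynomial with exactly
one factor of `(t-1)`. -/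
theorem alexander_poly_m3_even
    (m2 m3 : ℕ) (hm2 : 0 < m2) (hm3 : 0 < m3)
    (hcop : Nat.Coprime m2 m3) (heven : Even m3) :
    ∃ P Q : Polynomial ℤ,
      (X ^ (m2 * m3) - 1) ^ 2 * (X - 1) =
        P * ((X ^ m3 - 1) * (X ^ (2 * m2) - 1)) ∧
      P = (X - 1) * Q ∧ Q.eval 1 ≠ 0 := by
  obtain ⟨k, hk⟩ := heven
  have hk' : m3 = 2 * k := by omega
  have hkpos : 0 < k := by omega
  set S : Polynomial ℤ := ∑ i ∈ Finset.range m2, (X ^ m3) ^ i with hS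
  set T : Polynomial ℤ := ∑ i ∈ Finset.range k, (X ^ (2 * m2)) ^ i with hT
  have hSmul : S * (X ^ m3 - 1) = X ^ (m2 * m3) - 1 := by
    rw [hS, geom_sum_mul, ← pow_mul, mul_comm m3 m2]
  have hTmul : T * (X ^ (2 * m2) - 1) = X ^ (m2 * m3) - 1 := by
    rw [hT, geom_sum_mul, ← pow_mul]
    congr 1
    ring_nf
    rw [hk']
    ring
  refine ⟨(X - 1) * (S * T), S * T, ?_, rfl, ?_⟩
  · calc (X ^ (m2 * m3) - 1) ^ 2 * (X - 1)
        = (X - 1) * ((S * (X ^ m3 - 1)) * (T * (X ^ (2 * m2) - 1))) := by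
          rw [hSmul, hTmul]; ring
      _ = (X - 1) * (S * T) * ((X ^ m3 - 1) * (X ^ (2 * m2) - 1)) := by ring
  · have h1 : (S * T).eval 1 = (m2 : ℤ) * k := by
      simp [hS, hT, eval_finset_sum]
    rw [h1]
    positivity
end

section
/- Let $a_0, a_1, a_3$ be pairwise coprime positive integers with $a_0$ odd and $a_0, a_1, a_3 \geq 2$. The rational function $\Delta(t) = \frac{(t^{2a_0 a_1 a_3} - 1)^2 (t^{a_0} - 1)(t^{2a_1} - 1)(t^{2a_3} - 1)}{(t^{2a_0 a_1} - 1)(t^{2a_0 a_3} - 1)(t^{2a_1 a_3} - 1)^2 (t - 1)}$ is a polynomial with $\Delta(1) = a_0$. -/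
open Polynomial Finset

lemma key_dvd (m n : ℕ) (hm : 0 < m) (hn : 0 < n) :
    ((X:ℤ[X])^m - 1) * ((X:ℤ[X])^n - 1) ∣
      ((X:ℤ[X])^(Nat.lcm m n) - 1) * ((X:ℤ[X])^(Nat.gcd m n) - 1) := by
  have hl : 0 < Nat.lcm m n := Nat.lcm_pos hm hn
  have hg : 0 < Nat.gcd m n := Nat.gcd_pos_of_pos_left _ hm
  rw [← prod_cyclotomic_eq_X_pow_sub_one hm ℤ,
      ← prod_cyclotomic_eq_X_pow_sub_one hn ℤ,
      ← prod_cyclotomic_eq_X_pow_sub_one hl ℤ,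
      ← prod_cyclotomic_eq_X_pow_sub_one hg ℤ,
      ← Finset.prod_union_inter]
  have hint : m.divisors ∩ n.divisors = (Nat.gcd m n).divisors := by
    ext d
    simp only [Finset.mem_inter, Nat.mem_divisors, Nat.dvd_gcd_iff, hm.ne', hn.ne', hg.ne',
      ne_eq, not_false_eq_true, and_true]
  rw [hint]
  refine mul_dvd_mul (Finset.prod_dvd_prod_of_subset _ _ _ ?_) dvd_rfl
  intro d hd
  simp only [Finset.mem_union, Nat.mem_divisors] at hd ⊢
  rcases hd with h | h
  · exact ⟨h.1.trans (Nat.dvd_lcm_left m n), hl.ne'⟩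
  · exact ⟨h.1.trans (Nat.dvd_lcm_right m n), hl.ne'⟩

/-- Alexander polynomial of the Berglund–Hübsch dual in Lemma 4.5:
the displayed rational function is a polynomial with `Δ(1) = a₀`. -/
theorem alexander_poly_lemma_4_5
    (a0 a1 a3 : ℕ) (ha0 : 2 ≤ a0) (ha1 : 2 ≤ a1) (ha3 : 2 ≤ a3)
    (hodd : Odd a0)
    (h01 : Nat.Coprime a0 a1) (h03 : Nat.Coprime a0 a3)
    (h13 : Nat.Coprime a1 a3) :
    ∃ P : Polynomial ℤ,
      (X ^ (2 * a0 * a1 * a3) - 1) ^ 2 * (X ^ a0 - 1) * (X ^ (2 * a1) - 1) *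
          (X ^ (2 * a3) - 1) =
        P * ((X ^ (2 * a0 * a1) - 1) * (X ^ (2 * a0 * a3) - 1) *
          (X ^ (2 * a1 * a3) - 1) ^ 2 * (X - 1)) ∧
      P.eval 1 = (a0 : ℤ) := by
  have hp0 : 0 < a0 := by omega
  have hp1 : 0 < a1 := by omega
  have hp3 : 0 < a3 := by omega
  -- gcd/lcm computations
  have hg1 : Nat.gcd (2*a0*a1) (2*a1*a3) = 2*a1 := by
    rw [show 2*a0*a1 = 2*a1*a0 by ring, show 2*a1*a3 = 2*a1*a3 from rfl,
      Nat.gcd_mul_left, h03.gcd_eq_one, mul_one]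
  have hl1 : Nat.lcm (2*a0*a1) (2*a1*a3) = 2*a0*a1*a3 := by
    rw [show 2*a0*a1 = 2*a1*a0 by ring, Nat.lcm_mul_left, Nat.Coprime.lcm_eq_mul h03]
    ring
  have hg2 : Nat.gcd (2*a0*a3) (2*a1*a3) = 2*a3 := by
    rw [show 2*a0*a3 = 2*a3*a0 by ring, show 2*a1*a3 = 2*a3*a1 by ring,
      Nat.gcd_mul_left, h01.gcd_eq_one, mul_one]
  have hl2 : Nat.lcm (2*a0*a3) (2*a1*a3) = 2*a0*a1*a3 := by
    rw [show 2*a0*a3 = 2*a3*a0 by ring, show 2*a1*a3 = 2*a3*a1 by ring,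
      Nat.lcm_mul_left, Nat.Coprime.lcm_eq_mul h01]
    ring
  have q1 := key_dvd (2*a0*a1) (2*a1*a3) (by positivity) (by positivity)
  rw [hg1, hl1] at q1
  have q2 := key_dvd (2*a0*a3) (2*a1*a3) (by positivity) (by positivity)
  rw [hg2, hl2] at q2
  obtain ⟨Q1, hQ1⟩ := q1
  obtain ⟨Q2, hQ2⟩ := q2
  have hgeo : ∀ k : ℕ, (X:ℤ[X])^k - 1 = (∑ i ∈ Finset.range k, X^i) * (X - 1) :=
    fun k => (geom_sum_mul X k).symm
  set S : ℕ → ℤ[X] := fun k => ∑ i ∈ Finset.range k, X^i with hS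
  refine ⟨Q1 * Q2 * S a0, ?_, ?_⟩
  · have e1 : ((X:ℤ[X]) ^ (2 * a0 * a1 * a3) - 1) ^ 2 * (X ^ a0 - 1) * (X ^ (2 * a1) - 1) *
          (X ^ (2 * a3) - 1)
        = ((X^(2*a0*a1*a3) - 1) * (X^(2*a1) - 1)) *
          (((X^(2*a0*a1*a3) - 1) * (X^(2*a3) - 1)) * (X ^ a0 - 1)) := by ring
    rw [e1, hQ1, hQ2, hgeo a0]
    ring
  · -- first part again as an equation
    have hmain : ((X:ℤ[X]) ^ (2 * a0 * a1 * a3) - 1) ^ 2 * (X ^ a0 - 1) * (X ^ (2 * a1) - 1) *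
          (X ^ (2 * a3) - 1) =
        (Q1 * Q2 * S a0) * ((X ^ (2 * a0 * a1) - 1) * (X ^ (2 * a0 * a3) - 1) *
          (X ^ (2 * a1 * a3) - 1) ^ 2 * (X - 1)) := by
      have e1 : ((X:ℤ[X]) ^ (2 * a0 * a1 * a3) - 1) ^ 2 * (X ^ a0 - 1) * (X ^ (2 * a1) - 1) *
            (X ^ (2 * a3) - 1)
          = ((X^(2*a0*a1*a3) - 1) * (X^(2*a1) - 1)) *
            (((X^(2*a0*a1*a3) - 1) * (X^(2*a3) - 1)) * (X ^ a0 - 1)) := by ring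
      rw [e1, hQ1, hQ2, hgeo a0]
      ring
    simp only [hgeo] at hmain
    have hX : ((X:ℤ[X]) - 1) ≠ 0 := by
      simpa using Polynomial.X_sub_C_ne_zero (1:ℤ)
    have h3 : (S (2*a0*a1*a3))^2 * S a0 * S (2*a1) * S (2*a3)
        = (Q1 * Q2 * S a0) * (S (2*a0*a1) * S (2*a0*a3) * (S (2*a1*a3))^2) := by
      have h5 : ((S (2*a0*a1*a3))^2 * S a0 * S (2*a1) * S (2*a3)) * ((X:ℤ[X]) - 1)^5
          = ((Q1 * Q2 * S a0) * (S (2*a0*a1) * S (2*a0*a3) * (S (2*a1*a3))^2)) * ((X:ℤ[X]) - 1)^5 := by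
        linear_combination hmain
      exact mul_right_cancel₀ (pow_ne_zero 5 hX) h5
    have h4 := congrArg (Polynomial.eval (1:ℤ)) h3
    have hSeval : ∀ k : ℕ, (S k).eval 1 = (k:ℤ) := by
      intro k
      simp [hS, eval_finset_sum]
    simp only [eval_mul, eval_pow, hSeval] at h4
    push_cast at h4
    have hK : ((2:ℤ)*a0*a1 * (2*a0*a3) * (2*a1*a3)^2) ≠ 0 := by positivity
    have hfin : ((Q1 * Q2 * S a0).eval 1) * ((2:ℤ)*a0*a1 * (2*a0*a3) * (2*a1*a3)^2)
        = (a0:ℤ) * ((2:ℤ)*a0*a1 * (2*a0*a3) * (2*a1*a3)^2) := by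
      simp only [eval_mul, hSeval]
      linear_combination -h4
    simpa using mul_right_cancel₀ hK hfin
end

section
/- Let $a_1, a_2, a_3$ be pairwise coprime positive integers with $a_1, a_2$ odd and $a_1, a_2, a_3 \geq 2$. Then the rational function $\Delta(t) = \frac{(t^{2 a_1 a_2 a_3} - 1)(t^{a_1} - 1)(t^{a_2} - 1)(t^{2a_3} - 1)}{(t^{a_1 a_2} - 1)(t^{2 a_1 a_3} - 1)(t^{2 a_2 a_3} - 1)(t - 1)}$ is a polynomial satisfying $\Delta(1) = \frac{(2a_1 a_2 a_3)(a_1)(a_2)(2a_3)}{(a_1 a_2)(2a_1 a_3)(2a_2 a_3)} = 1$. -/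
/-!
As `X ^ n - 1 = ∏_{d ∣ n} Φ_d` and the divisor sets of `p, q, r ∣ N` intersect in the divisor
sets of their gcds, inclusion–exclusion for products over `p.divisors ∪ q.divisors ∪ r.divisors`
shows that `(X^N - 1) ∏ (X^{gcd} - 1)` over the three pairwise gcds is `∏ (X^p - 1)` times
`X^{gcd(p,q,r)} - 1` times the product of the `Φ_d` with `d ∣ N` dividing none of `p, q, r`.
For `p = a₁a₂`, `q = 2a₁a₃`, `r = 2a₂a₃` (with `a₁, a₂` odd and `a₁, a₂, a₃` pairwise coprime)
the pairwise gcds are `a₁`, `a₂`, `2a₃` and the triple gcd is `1`: exactly the fraction `Δ`.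
Both sides have four factors `X ^ n - 1`; cancelling `(X - 1)⁴` and evaluating the geometric
sums at `1` gives `Δ(1)` as the displayed ratio of degrees.
-/

open Polynomial

theorem Nat.divisors_inter_divisors {m n : ℕ} (hm : m ≠ 0) (hn : n ≠ 0) :
    m.divisors ∩ n.divisors = (m.gcd n).divisors := by
  ext d
  simp [Nat.dvd_gcd_iff, hm, hn, Nat.gcd_ne_zero_left hm]

theorem Finset.prod_union_union_mul_prod_inter {ι M : Type*} [CommMonoid M] [DecidableEq ι]
    (s t u : Finset ι) (f : ι → M) :
    (∏ i ∈ s ∪ t ∪ u, f i) * (∏ i ∈ s ∩ t, f i) * (∏ i ∈ s ∩ u, f i) * ∏ i ∈ t ∩ u, f i =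
      (∏ i ∈ s, f i) * (∏ i ∈ t, f i) * (∏ i ∈ u, f i) * ∏ i ∈ s ∩ t ∩ u, f i := by
  have hstu : (s ∪ t) ∩ u = s ∩ u ∪ t ∩ u := Finset.union_inter_distrib_right s t u
  have hmeet : s ∩ u ∩ (t ∩ u) = s ∩ t ∩ u := by
    ext; simp only [Finset.mem_inter]; tauto
  have h₁ := Finset.prod_union_inter (s₁ := s) (s₂ := t) (f := f)
  have h₂ := Finset.prod_union_inter (s₁ := s ∪ t) (s₂ := u) (f := f)
  have h₃ := Finset.prod_union_inter (s₁ := s ∩ u) (s₂ := t ∩ u) (f := f)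
  rw [← hstu, hmeet] at h₃
  calc _ = (∏ i ∈ s ∪ t ∪ u, f i) * ((∏ i ∈ s ∩ u, f i) * ∏ i ∈ t ∩ u, f i) *
        ∏ i ∈ s ∩ t, f i := by ac_rfl
    _ = (∏ i ∈ s ∪ t ∪ u, f i) * (∏ i ∈ (s ∪ t) ∩ u, f i) * (∏ i ∈ s ∩ t, f i) *
        ∏ i ∈ s ∩ t ∩ u, f i := by rw [← h₃]; ac_rfl
    _ = _ := by rw [h₂, ← h₁]; ac_rfl

theorem Polynomial.X_pow_sub_one_mul_gcd_eq_prod_cyclotomic_mul (R : Type*) [CommRing R]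
    {N p q r : ℕ} (hN : N ≠ 0) (hp : p ∣ N) (hq : q ∣ N) (hr : r ∣ N) :
    ((X : R[X]) ^ N - 1) * (X ^ p.gcd q - 1) * (X ^ p.gcd r - 1) * (X ^ q.gcd r - 1) =
      (∏ d ∈ N.divisors \ (p.divisors ∪ q.divisors ∪ r.divisors), cyclotomic d R) *
        ((X ^ p - 1) * (X ^ q - 1) * (X ^ r - 1) * (X ^ p.gcd (q.gcd r) - 1)) := by
  have hp0 : p ≠ 0 := ne_zero_of_dvd_ne_zero hN hp
  have hq0 : q ≠ 0 := ne_zero_of_dvd_ne_zero hN hq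
  have hr0 : r ≠ 0 := ne_zero_of_dvd_ne_zero hN hr
  have hprod : ∀ n : ℕ, n ≠ 0 → ∏ d ∈ n.divisors, cyclotomic d R = X ^ n - 1 :=
    fun _ hn => prod_cyclotomic_eq_X_pow_sub_one (Nat.pos_of_ne_zero hn) R
  have hsub : p.divisors ∪ q.divisors ∪ r.divisors ⊆ N.divisors :=
    Finset.union_subset (Finset.union_subset (Nat.divisors_subset_of_dvd hN hp)
      (Nat.divisors_subset_of_dvd hN hq)) (Nat.divisors_subset_of_dvd hN hr)
  have hincl := Finset.prod_union_union_mul_prod_inter p.divisors q.divisors r.divisors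
    (fun d => cyclotomic d R)
  rw [Nat.divisors_inter_divisors hp0 hq0, Nat.divisors_inter_divisors hp0 hr0,
    Nat.divisors_inter_divisors hq0 hr0,
    Nat.divisors_inter_divisors (Nat.gcd_ne_zero_left hp0) hr0, Nat.gcd_assoc] at hincl
  rw [← hprod N hN, ← Finset.prod_sdiff hsub, ← hprod p hp0, ← hprod q hq0, ← hprod r hr0,
    ← hprod (p.gcd q) (Nat.gcd_ne_zero_left hp0), ← hprod (p.gcd r) (Nat.gcd_ne_zero_left hp0),
    ← hprod (q.gcd r) (Nat.gcd_ne_zero_left hq0),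
    ← hprod (p.gcd (q.gcd r)) (Nat.gcd_ne_zero_left hp0), ← hincl]
  ring

theorem Polynomial.prod_X_pow_sub_one_eq_X_sub_one_pow_mul {R ι : Type*} [CommRing R]
    (s : Finset ι) (n : ι → ℕ) :
    ∏ i ∈ s, ((X : R[X]) ^ n i - 1) =
      (X - 1) ^ s.card * ∏ i ∈ s, ∑ j ∈ Finset.range (n i), X ^ j := by
  rw [← Finset.prod_const, ← Finset.prod_mul_distrib]
  exact Finset.prod_congr rfl fun i _ => (mul_geom_sum X (n i)).symm

theorem Polynomial.prod_eq_eval_one_mul_prod_of_prod_X_pow_sub_one_eq {R ι : Type*}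
    [CommRing R] [IsDomain R] (s : Finset ι) (n m : ι → ℕ) (P : R[X])
    (h : ∏ i ∈ s, ((X : R[X]) ^ n i - 1) = P * ∏ i ∈ s, ((X : R[X]) ^ m i - 1)) :
    ((∏ i ∈ s, n i : ℕ) : R) = P.eval 1 * (∏ i ∈ s, m i : ℕ) := by
  rw [prod_X_pow_sub_one_eq_X_sub_one_pow_mul, prod_X_pow_sub_one_eq_X_sub_one_pow_mul,
    mul_left_comm] at h
  have hX : ((X : R[X]) - 1) ^ s.card ≠ 0 := pow_ne_zero _ (by simpa using X_sub_C_ne_zero (1 : R))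
  simpa [eval_prod] using congrArg (eval 1) (mul_left_cancel₀ hX h)

/-- Alexander polynomial computation of Lemma 4.8: the displayed rational
function is a polynomial with `Δ(1) = 1`. -/
theorem alexander_poly_lemma_4_8
    (a1 a2 a3 : ℕ) (ha1 : 2 ≤ a1) (ha2 : 2 ≤ a2) (ha3 : 2 ≤ a3)
    (hodd1 : Odd a1) (hodd2 : Odd a2)
    (h12 : Nat.Coprime a1 a2) (h13 : Nat.Coprime a1 a3)
    (h23 : Nat.Coprime a2 a3) :
    (∃ P : Polynomial ℤ,
      (X ^ (2 * a1 * a2 * a3) - 1) * (X ^ a1 - 1) * (X ^ a2 - 1) *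
          (X ^ (2 * a3) - 1) =
        P * ((X ^ (a1 * a2) - 1) * (X ^ (2 * a1 * a3) - 1) *
          (X ^ (2 * a2 * a3) - 1) * (X - 1)) ∧
      P.eval 1 = 1) ∧
    ((2 * a1 * a2 * a3 : ℚ) * a1 * a2 * (2 * a3)) /
        ((a1 * a2 : ℚ) * (2 * a1 * a3) * (2 * a2 * a3)) = 1 := by
  have h1 : Nat.Coprime a1 (2 * a3) := hodd1.coprime_two_right.mul_right h13
  have h2 : Nat.Coprime a2 (2 * a3) := hodd2.coprime_two_right.mul_right h23
  have gcd_12_13 : (a1 * a2).gcd (2 * a1 * a3) = a1 := by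
    rw [show 2 * a1 * a3 = a1 * (2 * a3) by ring, Nat.gcd_mul_left, h2, mul_one]
  have gcd_12_23 : (a1 * a2).gcd (2 * a2 * a3) = a2 := by
    rw [show 2 * a2 * a3 = a2 * (2 * a3) by ring, mul_comm a1, Nat.gcd_mul_left, h1, mul_one]
  have gcd_13_23 : (2 * a1 * a3).gcd (2 * a2 * a3) = 2 * a3 := by
    rw [show 2 * a1 * a3 = a1 * (2 * a3) by ring, show 2 * a2 * a3 = a2 * (2 * a3) by ring,
      Nat.gcd_mul_right, h12, one_mul]
  have hP := X_pow_sub_one_mul_gcd_eq_prod_cyclotomic_mul ℤ (N := 2 * a1 * a2 * a3)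
    (p := a1 * a2) (q := 2 * a1 * a3) (r := 2 * a2 * a3) (by positivity)
    ⟨2 * a3, by ring⟩ ⟨a2, by ring⟩ ⟨a1, by ring⟩
  rw [gcd_12_13, gcd_12_23, gcd_13_23, (h1.mul_left h2 : Nat.Coprime (a1 * a2) (2 * a3))] at hP
  set P := ∏ d ∈ (2 * a1 * a2 * a3).divisors \
    ((a1 * a2).divisors ∪ (2 * a1 * a3).divisors ∪ (2 * a2 * a3).divisors), cyclotomic d ℤ
  have hdeg := prod_eq_eval_one_mul_prod_of_prod_X_pow_sub_one_eq Finset.univ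
    ![2 * a1 * a2 * a3, a1, a2, 2 * a3] ![a1 * a2, 2 * a1 * a3, 2 * a2 * a3, 1] P
    (by simpa [Fin.prod_univ_four] using hP)
  refine ⟨⟨P, by simpa using hP, ?_⟩, by field_simp⟩
  simp only [Fin.prod_univ_four, Matrix.cons_val_zero, Matrix.cons_val_one, Matrix.cons_val,
    mul_one, show 2 * a1 * a2 * a3 * a1 * a2 * (2 * a3) = a1 * a2 * (2 * a1 * a3) * (2 * a2 * a3)
      by ring] at hdeg
  exact (mul_eq_right₀ (by positivity)).mp hdeg.symm
end
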